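/- Let α be a type, let L₀ be the first-order language with exactly one unary relation symbol U (and no other symbols), and let L = L₀[[α]] be L₀ extended by a constant symbol c_a for each a : α. For a set X ⊆ α, let M_X be the L-structure with universe α interpreting U as membership in X and each constant c_a as a. Then for all X, Y ⊆ α: if there exists an L-embedding from M_X into M_Y, then X = Y. -/
import Mathlib


open FirstOrder

/-- The first-order language with exactly one unary relation symbol `U` and no
other symbols. -/
def unaryLang : FirstOrder.Language where
  Functions _ := Empty
  Relations n :=
    match n with
    | 1 => Unit
    | _ => Empty

/-- The `unaryLang`-structure on `α` interpreting the unary relation symbol `U`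
as membership in `X : Set α`. -/
def unaryStructure {α : Type*} (X : Set α) : unaryLang.Structure α where
  funMap f _ := nomatch f
  RelMap {n} r v :=
    match n, r, v with
    | 1, _, v => v 0 ∈ X
    | 0, r, _ => nomatch r
    | (_ + 2), r, _ => nomatch r

/-- The `unaryLang[[α]]`-structure `M_X` on universe `α`: the unary relation `U`
is interpreted as membership in `X`, and each constant symbol `c_a` (for `a : α`)
is interpreted as `a` itself. -/
def MStr {α : Type*} (X : Set α) : (unaryLang[[α]]).Structure α :=
  @FirstOrder.Language.sumStructure unaryLang (FirstOrder.Language.constantsOn α) α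
    (unaryStructure X) (FirstOrder.Language.constantsOn.structure id)

/-- Core of the derivation of Powerset from EST + VP: if there is an embedding
from the structure `M_X` into the structure `M_Y` (for the language with one unary
relation symbol and a constant for each element of `α`), then `X = Y`. -/
theorem eq_of_embedding_MStr {α : Type*} (X Y : Set α)
    (h : Nonempty (@FirstOrder.Language.Embedding (unaryLang[[α]]) α α
      (MStr X) (MStr Y))) : X = Y := by
  letI : (unaryLang[[α]]).Structure α := MStr X
  obtain ⟨f⟩ := h
  have hid : ∀ a : α, f a = a := fun a =>
    @FirstOrder.Language.Embedding.map_fun _ α α (MStr X) (MStr Y) f 0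
      (Sum.inr a) default
  ext a
  have key : (f a ∈ Y ↔ a ∈ X) :=
    @FirstOrder.Language.Embedding.map_rel _ α α (MStr X) (MStr Y) f 1
      (Sum.inl ()) (fun _ => a)
  rw [hid a] at key
  exact key.symm
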